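/- Let f(z,σ) = g(|z|²/4, σ) for a C² function g : ℝ × ℝ^k → ℝ. Then at every point (z,σ) with z ≠ 0 and ∇g(ξ,σ) ≠ 0, where ξ = |z|²/4, one has ( |∇_H f|² Δ_H f − Δ_{H,∞} f ) / |∇_H f|³ = (|z|/2) · [ (1/|∇g|) ( g_{ξξ} + ((m−1)/(2ξ)) g_ξ + Δ_σ g ) − Δ_∞ g / |∇g|³ ], where all quantities involving g are evaluated at (ξ,σ), ∇g = (g_ξ, ∇_σ g), and Δ_∞ g = (1/2)⟨∇(|∇g|²), ∇g⟩. (The left-hand side is the horizontal mean curvature of the level set of f at the point, computed from the defining function f.) -/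

import Mathlib

open scoped BigOperators
open Matrix

noncomputable section

variable {m k : ℕ}

/-- The ambient point space ℝ^m × ℝ^k. -/
abbrev Pt (m k : ℕ) := EuclideanSpace ℝ (Fin m) × EuclideanSpace ℝ (Fin k)

/-- H-type (Clifford) condition on the matrices J_ℓ : skew-symmetry and
    J_ℓ J_{ℓ'} + J_{ℓ'} J_ℓ = -2 δ_{ℓℓ'} Id. -/
def HType (J : Fin k → Matrix (Fin m) (Fin m) ℝ) : Prop :=
  (∀ ℓ, (J ℓ)ᵀ = -(J ℓ)) ∧
  ∀ ℓ ℓ', J ℓ * J ℓ' + J ℓ' * J ℓ =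
    (if ℓ = ℓ' then (-2 : ℝ) else 0) • (1 : Matrix (Fin m) (Fin m) ℝ)

/-- Horizontal derivative X_i f(z,σ) = ∂_{z_i} f + (1/2) Σ_ℓ (J_ℓ z)_i ∂_{σ_ℓ} f. -/
def XD (J : Fin k → Matrix (Fin m) (Fin m) ℝ) (f : Pt m k → ℝ) (i : Fin m) (x : Pt m k) : ℝ :=
  fderiv ℝ f x (EuclideanSpace.single i 1, 0)
    + (1/2) * ∑ ℓ : Fin k, (∑ j : Fin m, J ℓ i j * x.1 j) *
        fderiv ℝ f x (0, EuclideanSpace.single ℓ 1)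

/-- Squared length of the horizontal gradient. -/
def hGradSq (J : Fin k → Matrix (Fin m) (Fin m) ℝ) (f : Pt m k → ℝ) (x : Pt m k) : ℝ :=
  ∑ i : Fin m, (XD J f i x) ^ 2

/-- Length of the horizontal gradient. -/
def hGradNorm (J : Fin k → Matrix (Fin m) (Fin m) ℝ) (f : Pt m k → ℝ) (x : Pt m k) : ℝ :=
  Real.sqrt (hGradSq J f x)

/-- Horizontal Laplacian Δ_H f = Σ X_i(X_i f). -/
def hLap (J : Fin k → Matrix (Fin m) (Fin m) ℝ) (f : Pt m k → ℝ) (x : Pt m k) : ℝ :=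
  ∑ i : Fin m, XD J (XD J f i) i x

/-- Horizontal ∞-Laplacian Δ_{H,∞} f = (1/2) Σ X_i(|∇_H f|²) X_i f. -/
def hInfLap (J : Fin k → Matrix (Fin m) (Fin m) ℝ) (f : Pt m k → ℝ) (x : Pt m k) : ℝ :=
  (1/2) * ∑ i : Fin m, XD J (hGradSq J f) i x * XD J f i x

/-- Horizontal p-Laplacian Δ_{H,p} f = Σ X_i(|∇_H f|^{p-2} X_i f). -/
def hPLap (J : Fin k → Matrix (Fin m) (Fin m) ℝ) (p : ℝ) (f : Pt m k → ℝ) (x : Pt m k) : ℝ :=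
  ∑ i : Fin m, XD J (fun y => (hGradSq J f y) ^ ((p - 2) / 2) * XD J f i y) i x

/-- Korányi gauge N(z,σ) = (|z|⁴ + 16|σ|²)^{1/4}. -/
def gaugeN (x : Pt m k) : ℝ := (‖x.1‖ ^ 4 + 16 * ‖x.2‖ ^ 2) ^ ((1 : ℝ)/4)

/-- ∂_ξ g for g : ℝ × ℝ^k → ℝ. -/
def gXi (g : ℝ × EuclideanSpace ℝ (Fin k) → ℝ) (y : ℝ × EuclideanSpace ℝ (Fin k)) : ℝ :=
  fderiv ℝ g y (1, 0)

/-- ∂_{σ_ℓ} g for g : ℝ × ℝ^k → ℝ. -/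
def gS (g : ℝ × EuclideanSpace ℝ (Fin k) → ℝ) (ℓ : Fin k) (y : ℝ × EuclideanSpace ℝ (Fin k)) : ℝ :=
  fderiv ℝ g y (0, EuclideanSpace.single ℓ 1)

/-- |∇ g|² = g_ξ² + |∇_σ g|². -/
def gGradSq (g : ℝ × EuclideanSpace ℝ (Fin k) → ℝ) (y : ℝ × EuclideanSpace ℝ (Fin k)) : ℝ :=
  (gXi g y) ^ 2 + ∑ ℓ : Fin k, (gS g ℓ y) ^ 2

/-- g_{ξξ}. -/
def gXiXi (g : ℝ × EuclideanSpace ℝ (Fin k) → ℝ) (y : ℝ × EuclideanSpace ℝ (Fin k)) : ℝ :=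
  fderiv ℝ (gXi g) y (1, 0)

/-- Δ_σ g. -/
def gLapS (g : ℝ × EuclideanSpace ℝ (Fin k) → ℝ) (y : ℝ × EuclideanSpace ℝ (Fin k)) : ℝ :=
  ∑ ℓ : Fin k, fderiv ℝ (gS g ℓ) y (0, EuclideanSpace.single ℓ 1)

/-- Euclidean ∞-Laplacian Δ_∞ g = (1/2)⟨∇(|∇g|²), ∇g⟩ on ℝ × ℝ^k. -/
def gInf (g : ℝ × EuclideanSpace ℝ (Fin k) → ℝ) (y : ℝ × EuclideanSpace ℝ (Fin k)) : ℝ :=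
  (1/2) * (fderiv ℝ (gGradSq g) y (1, 0) * gXi g y
    + ∑ ℓ : Fin k, fderiv ℝ (gGradSq g) y (0, EuclideanSpace.single ℓ 1) * gS g ℓ y)

/-
Write φ(z,σ) = (|z|²/4, σ), so that f = g ∘ φ. By the chain rule, for any h on ℝ × ℝ^k,
X_i(h ∘ φ) = ½ (z_i ∂_ξ h + Σ_ℓ (J_ℓ z)_i ∂_{σ_ℓ} h) ∘ φ. The H-type relations make
z, J_1 z, …, J_k z pairwise orthogonal of common length |z|, so inner products of horizontal
vectors of this shape are |z|²/4 = ξ times the Euclidean inner products of the corresponding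
covectors in ℝ × ℝ^k. This gives |∇_H f|² = ξ |∇g|² ∘ φ, and then, the J_ℓ having zero diagonal,
Δ_H f = (m/2) g_ξ + ξ (g_ξξ + Δ_σ g) and Δ_{H,∞} f = ξ (|∇g|² g_ξ / 2 + ξ Δ_∞ g).
The identity is then algebra.
-/
theorem ofLp_dotProduct_ofLp_self {n : Type*} [Fintype n] (z : EuclideanSpace ℝ n) :
    z.ofLp ⬝ᵥ z.ofLp = ‖z‖ ^ 2 := by
  rw [← real_inner_self_eq_norm_sq, EuclideanSpace.inner_eq_star_dotProduct]
  rfl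

theorem Matrix.dotProduct_mulVec_self_eq_zero_of_transpose_eq_neg {R n : Type*} [CommRing R]
    [IsAddTorsionFree R] [Fintype n] {A : Matrix n n R} (hA : Aᵀ = -A) (z : n → R) :
    z ⬝ᵥ A *ᵥ z = 0 := by
  refine self_eq_neg.mp ?_
  calc z ⬝ᵥ A *ᵥ z = Aᵀ *ᵥ z ⬝ᵥ z := by
        rw [dotProduct_mulVec, ← vecMul_transpose, transpose_transpose]
    _ = -(z ⬝ᵥ A *ᵥ z) := by rw [hA, neg_mulVec, neg_dotProduct, dotProduct_comm]

theorem Matrix.mulVec_dotProduct_mulVec_of_transpose_eq_neg {R n : Type*} [CommRing R]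
    [Fintype n] {A : Matrix n n R} (hA : Aᵀ = -A) (B : Matrix n n R) (z : n → R) :
    A *ᵥ z ⬝ᵥ B *ᵥ z = -(z ⬝ᵥ (A * B) *ᵥ z) := by
  rw [← vecMul_transpose, ← dotProduct_mulVec, hA, ← mulVec_mulVec, neg_mulVec, dotProduct_neg]

def horizontalLift (J : Fin k → Matrix (Fin m) (Fin m) ℝ) (z : Fin m → ℝ) (a : ℝ)
    (b : Fin k → ℝ) : Fin m → ℝ :=
  (1 / 2 : ℝ) • (a • z + ∑ ℓ, b ℓ • J ℓ *ᵥ z)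

namespace HType

variable {J : Fin k → Matrix (Fin m) (Fin m) ℝ}

theorem dotProduct_mulVec_self (hJ : HType J) (ℓ : Fin k) (z : Fin m → ℝ) :
    z ⬝ᵥ J ℓ *ᵥ z = 0 :=
  dotProduct_mulVec_self_eq_zero_of_transpose_eq_neg (hJ.1 ℓ) z

theorem mulVec_dotProduct_mulVec (hJ : HType J) (ℓ ℓ' : Fin k) (z : Fin m → ℝ) :
    J ℓ *ᵥ z ⬝ᵥ J ℓ' *ᵥ z = if ℓ = ℓ' then z ⬝ᵥ z else 0 := by
  have hsum : 2 * (J ℓ *ᵥ z ⬝ᵥ J ℓ' *ᵥ z) = -(z ⬝ᵥ (J ℓ * J ℓ' + J ℓ' * J ℓ) *ᵥ z) := by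
    rw [two_mul]
    nth_rewrite 2 [dotProduct_comm]
    rw [mulVec_dotProduct_mulVec_of_transpose_eq_neg (hJ.1 ℓ),
      mulVec_dotProduct_mulVec_of_transpose_eq_neg (hJ.1 ℓ'), add_mulVec, dotProduct_add]
    ring
  rw [hJ.2, smul_mulVec, one_mulVec, dotProduct_smul, smul_eq_mul] at hsum
  split_ifs at hsum ⊢ <;> linarith

theorem dotProduct_horizontalLift (hJ : HType J) (z : Fin m → ℝ) (a : ℝ) (b : Fin k → ℝ) :
    z ⬝ᵥ horizontalLift J z a b = z ⬝ᵥ z / 2 * a := by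
  simp only [horizontalLift, dotProduct_smul, dotProduct_add, dotProduct_sum,
    hJ.dotProduct_mulVec_self, smul_eq_mul, mul_zero, Finset.sum_const_zero]
  ring

theorem mulVec_dotProduct_horizontalLift (hJ : HType J) (z : Fin m → ℝ) (a : ℝ)
    (b : Fin k → ℝ) (ℓ : Fin k) :
    J ℓ *ᵥ z ⬝ᵥ horizontalLift J z a b = z ⬝ᵥ z / 2 * b ℓ := by
  simp only [horizontalLift, dotProduct_smul, dotProduct_add, dotProduct_sum,
    hJ.mulVec_dotProduct_mulVec, dotProduct_comm _ z, hJ.dotProduct_mulVec_self, smul_eq_mul,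
    mul_ite, mul_zero, Finset.sum_ite_eq, Finset.mem_univ, if_true]
  ring

theorem horizontalLift_dotProduct_horizontalLift (hJ : HType J) (z : Fin m → ℝ) (a a' : ℝ)
    (b b' : Fin k → ℝ) :
    horizontalLift J z a b ⬝ᵥ horizontalLift J z a' b' = z ⬝ᵥ z / 4 * (a * a' + b ⬝ᵥ b') := by
  conv_lhs => rw [horizontalLift]
  simp only [smul_dotProduct, add_dotProduct, sum_dotProduct, hJ.dotProduct_horizontalLift,
    hJ.mulVec_dotProduct_horizontalLift, smul_eq_mul]
  have hb : ∑ ℓ, b ℓ * (z ⬝ᵥ z / 2 * b' ℓ) = z ⬝ᵥ z / 2 * (b ⬝ᵥ b') := by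
    show _ = _ * ∑ ℓ, b ℓ * b' ℓ
    rw [Finset.mul_sum]
    exact Finset.sum_congr rfl fun ℓ _ => by ring
  rw [hb]
  ring

end HType

theorem horizontalLift_apply (J : Fin k → Matrix (Fin m) (Fin m) ℝ) (z : Fin m → ℝ) (a : ℝ)
    (b : Fin k → ℝ) (i : Fin m) :
    horizontalLift J z a b i = 1 / 2 * (a * z i + ∑ ℓ, b ℓ * (J ℓ *ᵥ z) i) := by
  simp [horizontalLift, Finset.sum_apply]

def horizontalField (J : Fin k → Matrix (Fin m) (Fin m) ℝ) (i : Fin m) (x : Pt m k) : Pt m k :=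
  (EuclideanSpace.single i 1, 0) + ∑ ℓ, (1 / 2 * (J ℓ *ᵥ x.1) i) • (0, EuclideanSpace.single ℓ 1)

theorem XD_eq_fderiv_horizontalField (J : Fin k → Matrix (Fin m) (Fin m) ℝ) (f : Pt m k → ℝ)
    (i : Fin m) (x : Pt m k) : XD J f i x = fderiv ℝ f x (horizontalField J i x) := by
  simp only [XD, horizontalField, map_add, map_sum, map_smul, smul_eq_mul, Finset.mul_sum]
  congr 1
  exact Finset.sum_congr rfl fun ℓ _ => by simp only [mulVec, dotProduct]; ring

theorem HasFDerivAt.XD_eq {f : Pt m k → ℝ} {f' : Pt m k →L[ℝ] ℝ} {x : Pt m k}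
    (hf : HasFDerivAt f f' x) (J : Fin k → Matrix (Fin m) (Fin m) ℝ) (i : Fin m) :
    XD J f i x = f' (horizontalField J i x) := by
  rw [XD_eq_fderiv_horizontalField, hf.fderiv]

def toXiSigma (x : Pt m k) : ℝ × EuclideanSpace ℝ (Fin k) := (‖x.1‖ ^ 2 / 4, x.2)

theorem hasFDerivAt_toXiSigma (x : Pt m k) :
    HasFDerivAt toXiSigma
      ((((1 : ℝ) / 2) • (innerSL ℝ x.1).comp (ContinuousLinearMap.fst ℝ _ _)).prod
        (ContinuousLinearMap.snd ℝ _ _)) x := by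
  have hnorm : HasFDerivAt (fun p : Pt m k => ‖p.1‖ ^ 2)
      (2 • (innerSL ℝ x.1).comp (ContinuousLinearMap.fst ℝ _ _)) x :=
    hasFDerivAt_fst.norm_sq
  have hφ : (fun p : Pt m k => (‖p.1‖ ^ 2 * (1 / 4), p.2)) = toXiSigma := by
    funext p
    simp only [toXiSigma, div_eq_mul_inv, one_mul]
  have h := (hnorm.mul_const (1 / 4 : ℝ)).prodMk (hasFDerivAt_snd (p := x))
  rw [hφ] at h
  exact h.congr_fderiv (by ext v <;> simp; ring)

theorem fderiv_toXiSigma_horizontalField (J : Fin k → Matrix (Fin m) (Fin m) ℝ) (i : Fin m)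
    (x : Pt m k) :
    fderiv ℝ toXiSigma x (horizontalField J i x)
      = (x.1 i / 2) • (1, 0) + ∑ ℓ, (1 / 2 * (J ℓ *ᵥ x.1) i) • (0, EuclideanSpace.single ℓ 1) := by
  rw [(hasFDerivAt_toXiSigma x).fderiv]
  simp only [horizontalField, map_add, map_sum, map_smul]
  congr 1
  · simp [EuclideanSpace.inner_single_right]; ring
  · simp

theorem XD_comp_toXiSigma {h : ℝ × EuclideanSpace ℝ (Fin k) → ℝ} {x : Pt m k}
    (hh : DifferentiableAt ℝ h (toXiSigma x)) (J : Fin k → Matrix (Fin m) (Fin m) ℝ) (i : Fin m) :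
    XD J (h ∘ toXiSigma) i x
      = horizontalLift J x.1 (gXi h (toXiSigma x)) (fun ℓ => gS h ℓ (toXiSigma x)) i := by
  rw [XD_eq_fderiv_horizontalField,
    fderiv_comp x hh (hasFDerivAt_toXiSigma x).differentiableAt, ContinuousLinearMap.comp_apply,
    fderiv_toXiSigma_horizontalField, horizontalLift_apply, mul_add, Finset.mul_sum]
  simp only [map_add, map_sum, map_smul, smul_eq_mul, gXi, gS]
  congr 1
  · ring
  · exact Finset.sum_congr rfl fun ℓ _ => by ring

theorem horizontalField_fst (J : Fin k → Matrix (Fin m) (Fin m) ℝ) (i : Fin m) (x : Pt m k) :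
    (horizontalField J i x).1 = EuclideanSpace.single i 1 := by
  simp [horizontalField, Prod.fst_sum]

theorem XD_horizontalLift {J : Fin k → Matrix (Fin m) (Fin m) ℝ} (hJ : ∀ ℓ, (J ℓ)ᵀ = -J ℓ)
    {A : Pt m k → ℝ} {B : Fin k → Pt m k → ℝ} {x : Pt m k} (hA : DifferentiableAt ℝ A x)
    (hB : ∀ ℓ, DifferentiableAt ℝ (B ℓ) x) (i : Fin m) :
    XD J (fun y => horizontalLift J y.1 (A y) (fun ℓ => B ℓ y) i) i x
      = 1 / 2 * (A x + x.1 i * XD J A i x + ∑ ℓ, (J ℓ *ᵥ x.1) i * XD J (B ℓ) i x) := by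
  have hcoord : ∀ j : Fin m, HasFDerivAt (fun y : Pt m k => y.1 j)
      ((EuclideanSpace.proj j).comp (ContinuousLinearMap.fst ℝ _ _)) x := fun j =>
    ((EuclideanSpace.proj (𝕜 := ℝ) j).comp
      (ContinuousLinearMap.fst ℝ (EuclideanSpace ℝ (Fin m)) (EuclideanSpace ℝ (Fin k)))).hasFDerivAt
  have hrow : ∀ ℓ, HasFDerivAt (fun y : Pt m k => (J ℓ *ᵥ y.1) i)
      (∑ j, J ℓ i j • (EuclideanSpace.proj j).comp (ContinuousLinearMap.fst ℝ _ _)) x :=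
    fun ℓ => HasFDerivAt.fun_sum (u := Finset.univ) fun j _ => (hcoord j).const_mul (J ℓ i j)
  have hdiag : ∀ ℓ, J ℓ i i = 0 := fun ℓ => by
    have := congrFun (congrFun (hJ ℓ) i) i
    simp only [transpose_apply, Matrix.neg_apply] at this
    linarith
  simp only [horizontalLift_apply]
  have hF : HasFDerivAt (fun y : Pt m k => 1 / 2 * (A y * y.1 i + ∑ ℓ, B ℓ y * (J ℓ *ᵥ y.1) i))
      _ x :=
    ((hA.hasFDerivAt.mul (hcoord i)).add (HasFDerivAt.fun_sum (u := Finset.univ) fun ℓ _ =>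
      (hB ℓ).hasFDerivAt.mul (hrow ℓ))).const_mul (1 / 2)
  rw [hF.XD_eq]
  simp [horizontalField_fst, XD_eq_fderiv_horizontalField, hdiag]
  ring

theorem ContDiff.gXi {n : WithTop ℕ∞} {g : ℝ × EuclideanSpace ℝ (Fin k) → ℝ}
    (hg : ContDiff ℝ (n + 1) g) : ContDiff ℝ n (gXi g) :=
  (ContinuousLinearMap.apply ℝ ℝ ((1 : ℝ), (0 : EuclideanSpace ℝ (Fin k)))).contDiff.comp
    (hg.fderiv_right le_rfl)

theorem ContDiff.gS {n : WithTop ℕ∞} {g : ℝ × EuclideanSpace ℝ (Fin k) → ℝ}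
    (hg : ContDiff ℝ (n + 1) g) (ℓ : Fin k) : ContDiff ℝ n (gS g ℓ) :=
  (ContinuousLinearMap.apply ℝ ℝ ((0 : ℝ), EuclideanSpace.single ℓ (1 : ℝ))).contDiff.comp
    (hg.fderiv_right le_rfl)

theorem ContDiff.gGradSq {n : WithTop ℕ∞} {g : ℝ × EuclideanSpace ℝ (Fin k) → ℝ}
    (hg : ContDiff ℝ (n + 1) g) : ContDiff ℝ n (gGradSq g) :=
  (hg.gXi.pow 2).add (ContDiff.sum fun ℓ _ => (hg.gS ℓ).pow 2)

theorem gXi_fst_mul {G : ℝ × EuclideanSpace ℝ (Fin k) → ℝ} {p : ℝ × EuclideanSpace ℝ (Fin k)}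
    (hG : DifferentiableAt ℝ G p) : gXi (fun q => q.1 * G q) p = G p + p.1 * gXi G p := by
  rw [gXi, fderiv_fun_mul differentiableAt_fst hG, gXi]
  simp [fderiv_fst]
  ring

theorem gS_fst_mul {G : ℝ × EuclideanSpace ℝ (Fin k) → ℝ} {p : ℝ × EuclideanSpace ℝ (Fin k)}
    (hG : DifferentiableAt ℝ G p) (ℓ : Fin k) : gS (fun q => q.1 * G q) ℓ p = p.1 * gS G ℓ p := by
  rw [gS, fderiv_fun_mul differentiableAt_fst hG, gS]
  simp [fderiv_fst]

theorem HType.hGradSq_comp_toXiSigma {J : Fin k → Matrix (Fin m) (Fin m) ℝ} (hJ : HType J)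
    {g : ℝ × EuclideanSpace ℝ (Fin k) → ℝ} (hg : Differentiable ℝ g) (x : Pt m k) :
    hGradSq J (g ∘ toXiSigma) x = ‖x.1‖ ^ 2 / 4 * gGradSq g (toXiSigma x) := by
  simp only [hGradSq, XD_comp_toXiSigma (hg _), sq, ← dotProduct.eq_1]
  rw [hJ.horizontalLift_dotProduct_horizontalLift, ofLp_dotProduct_ofLp_self, gGradSq]
  simp only [dotProduct, sq]

theorem HType.hLap_comp_toXiSigma {J : Fin k → Matrix (Fin m) (Fin m) ℝ} (hJ : HType J)
    {g : ℝ × EuclideanSpace ℝ (Fin k) → ℝ} (hg : ContDiff ℝ 2 g) (x : Pt m k) :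
    hLap J (g ∘ toXiSigma) x
      = m / 2 * gXi g (toXiSigma x)
        + ‖x.1‖ ^ 2 / 4 * (gXiXi g (toXiSigma x) + gLapS g (toXiSigma x)) := by
  have hφ : Differentiable ℝ (toXiSigma : Pt m k → _) := fun y =>
    (hasFDerivAt_toXiSigma y).differentiableAt
  have hXi : Differentiable ℝ (gXi g) := (ContDiff.gXi (n := 1) hg).differentiable one_ne_zero
  have hS : ∀ ℓ, Differentiable ℝ (gS g ℓ) := fun ℓ =>
    (ContDiff.gS (n := 1) hg ℓ).differentiable one_ne_zero
  have hXf : ∀ i, XD J (g ∘ toXiSigma) i = fun y =>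
      horizontalLift J y.1 ((gXi g ∘ toXiSigma) y) (fun ℓ => (gS g ℓ ∘ toXiSigma) y) i :=
    fun i => funext fun y => XD_comp_toXiSigma ((hg.differentiable two_ne_zero) _) J i
  simp only [hLap, hXf,
    XD_horizontalLift hJ.1 ((hXi _).comp _ (hφ _)) (fun ℓ => (hS ℓ _).comp _ (hφ _))]
  simp only [XD_comp_toXiSigma (hXi _), XD_comp_toXiSigma (hS _ _), Function.comp_apply]
  rw [← Finset.mul_sum, Finset.sum_add_distrib, Finset.sum_add_distrib, Finset.sum_comm]
  simp only [← dotProduct.eq_1, hJ.dotProduct_horizontalLift,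
    hJ.mulVec_dotProduct_horizontalLift, ofLp_dotProduct_ofLp_self,
    Finset.sum_const, Finset.card_univ, Fintype.card_fin, nsmul_eq_mul, ← Finset.mul_sum]
  change _ = _ + _ * (gXi (gXi g) (toXiSigma x) + ∑ ℓ, gS (gS g ℓ) ℓ (toXiSigma x))
  ring

theorem HType.hInfLap_comp_toXiSigma {J : Fin k → Matrix (Fin m) (Fin m) ℝ} (hJ : HType J)
    {g : ℝ × EuclideanSpace ℝ (Fin k) → ℝ} (hg : ContDiff ℝ 2 g) (x : Pt m k) :
    hInfLap J (g ∘ toXiSigma) x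
      = ‖x.1‖ ^ 2 / 4 * (gGradSq g (toXiSigma x) * gXi g (toXiSigma x) / 2
        + ‖x.1‖ ^ 2 / 4 * gInf g (toXiSigma x)) := by
  have hg₁ : Differentiable ℝ g := hg.differentiable two_ne_zero
  have hG : Differentiable ℝ (gGradSq g) :=
    (ContDiff.gGradSq (n := 1) hg).differentiable one_ne_zero
  have hH : Differentiable ℝ (fun p : ℝ × EuclideanSpace ℝ (Fin k) => p.1 * gGradSq g p) :=
    differentiable_fst.mul hG
  have hGrad : hGradSq J (g ∘ toXiSigma) = (fun p => p.1 * gGradSq g p) ∘ toXiSigma :=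
    funext (hJ.hGradSq_comp_toXiSigma hg₁)
  simp only [hInfLap, hGrad, XD_comp_toXiSigma (hH _), XD_comp_toXiSigma (hg₁ _)]
  rw [← dotProduct, hJ.horizontalLift_dotProduct_horizontalLift, ofLp_dotProduct_ofLp_self]
  simp only [gXi_fst_mul (hG _), gS_fst_mul (hG _)]
  change _ = _ * (_ + _ * (1 / 2 * (gXi (gGradSq g) (toXiSigma x) * gXi g (toXiSigma x)
    + ∑ ℓ, gS (gGradSq g) ℓ (toXiSigma x) * gS g ℓ (toXiSigma x))))
  simp only [dotProduct, toXiSigma, mul_assoc, ← Finset.mul_sum]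
  ring

theorem horizontal_mean_curvature_partial_symmetry_general
    (J : Fin k → Matrix (Fin m) (Fin m) ℝ) (hJ : HType J)
    (g : ℝ × EuclideanSpace ℝ (Fin k) → ℝ) (hg : ContDiff ℝ 2 g)
    (f : Pt m k → ℝ) (hf : ∀ x : Pt m k, f x = g (‖x.1‖ ^ 2 / 4, x.2))
    (x : Pt m k) (hz : x.1 ≠ 0)
    (hgrad : gGradSq g (‖x.1‖ ^ 2 / 4, x.2) ≠ 0) :
    (hGradSq J f x * hLap J f x - hInfLap J f x) / (hGradNorm J f x) ^ 3 =
      (‖x.1‖ / 2) *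
        ((1 / Real.sqrt (gGradSq g (‖x.1‖ ^ 2 / 4, x.2))) *
            (gXiXi g (‖x.1‖ ^ 2 / 4, x.2)
              + (((m : ℝ) - 1) / (2 * (‖x.1‖ ^ 2 / 4))) * gXi g (‖x.1‖ ^ 2 / 4, x.2)
              + gLapS g (‖x.1‖ ^ 2 / 4, x.2))
          - gInf g (‖x.1‖ ^ 2 / 4, x.2) /
              (Real.sqrt (gGradSq g (‖x.1‖ ^ 2 / 4, x.2))) ^ 3) := by
  obtain rfl : f = g ∘ toXiSigma := funext hf
  rw [hGradNorm, hJ.hGradSq_comp_toXiSigma (hg.differentiable two_ne_zero),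
    hJ.hLap_comp_toXiSigma hg, hJ.hInfLap_comp_toXiSigma hg]
  simp only [toXiSigma]
  have hG : 0 < gGradSq g (‖x.1‖ ^ 2 / 4, x.2) :=
    lt_of_le_of_ne (by rw [gGradSq]; positivity) (Ne.symm hgrad)
  have hsqrt : √(‖x.1‖ ^ 2 / 4 * gGradSq g (‖x.1‖ ^ 2 / 4, x.2))
      = ‖x.1‖ / 2 * √(gGradSq g (‖x.1‖ ^ 2 / 4, x.2)) := by
    rw [show ‖x.1‖ ^ 2 / 4 = (‖x.1‖ / 2) ^ 2 by ring, Real.sqrt_mul (sq_nonneg _),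
      Real.sqrt_sq (by positivity)]
  rw [hsqrt]
  set t := √(gGradSq g (‖x.1‖ ^ 2 / 4, x.2)) with ht
  have ht₀ : t ≠ 0 := (Real.sqrt_pos.mpr hG).ne'
  have hr : ‖x.1‖ ≠ 0 := norm_ne_zero_iff.mpr hz
  rw [← Real.sq_sqrt hG.le, ← ht]
  field_simp
  ring

/-- horizontal mean curvature of a level set of a function with partial
symmetry f(z,σ) = g(|z|²/4, σ): at points with z ≠ 0 and ∇g ≠ 0, with ξ = |z|²/4,
( |∇_H f|² Δ_H f − Δ_{H,∞} f ) / |∇_H f|³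
  = (|z|/2)·[ (1/|∇g|)(g_{ξξ} + ((m−1)/(2ξ))g_ξ + Δ_σ g) − Δ_∞ g/|∇g|³ ]. -/
theorem horizontal_mean_curvature_partial_symmetry
    (hm : 1 ≤ m) (hk : 1 ≤ k)
    (J : Fin k → Matrix (Fin m) (Fin m) ℝ) (hJ : HType J)
    (g : ℝ × EuclideanSpace ℝ (Fin k) → ℝ) (hg : ContDiff ℝ 2 g)
    (f : Pt m k → ℝ) (hf : ∀ x : Pt m k, f x = g (‖x.1‖ ^ 2 / 4, x.2))
    (x : Pt m k) (hz : x.1 ≠ 0)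
    (hgrad : gGradSq g (‖x.1‖ ^ 2 / 4, x.2) ≠ 0) :
    (hGradSq J f x * hLap J f x - hInfLap J f x) / (hGradNorm J f x) ^ 3 =
      (‖x.1‖ / 2) *
        ((1 / Real.sqrt (gGradSq g (‖x.1‖ ^ 2 / 4, x.2))) *
            (gXiXi g (‖x.1‖ ^ 2 / 4, x.2)
              + (((m : ℝ) - 1) / (2 * (‖x.1‖ ^ 2 / 4))) * gXi g (‖x.1‖ ^ 2 / 4, x.2)
              + gLapS g (‖x.1‖ ^ 2 / 4, x.2))
          - gInf g (‖x.1‖ ^ 2 / 4, x.2) /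
              (Real.sqrt (gGradSq g (‖x.1‖ ^ 2 / 4, x.2))) ^ 3) :=
  horizontal_mean_curvature_partial_symmetry_general J hJ g hg f hf x hz hgrad

end
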